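/- Calibration by multiplicative rescaling: if μ_x = μ_y = 0 and r = R (where r = c/σ_x² and R = γ/(σ_x σ_y)), then the rescaled members X_i* = (σ_y/σ_x) X_i satisfy all three second-order exchangeability conditions with the truth — E[X_i*] = E[Y], Var(X_i*) = σ_y², and Cov(X_i*, X_j*) = Cov(X_i*, Y) for i ≠ j — and the expected ensemble variance of the rescaled ensemble equals (σ_y/σ_x)² σ_e², where σ_e² = σ_x² − c. -/

import Mathlib

open MeasureTheory

/-- Covariance of two real random variables. -/
noncomputable def cov {Ω : Type*} [MeasurableSpace Ω] (μ : Measure Ω) (f g : Ω → ℝ) : ℝ :=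
  ∫ ω, (f ω - ∫ x, f x ∂μ) * (g ω - ∫ x, g x ∂μ) ∂μ

/-- Ensemble mean. -/
noncomputable def ensMean {Ω : Type*} {n : ℕ} (X : Fin n → Ω → ℝ) (ω : Ω) : ℝ :=
  (∑ i, X i ω) / n

/-- Unbiased ensemble variance. -/
noncomputable def ensVar {Ω : Type*} {n : ℕ} (X : Fin n → Ω → ℝ) (ω : Ω) : ℝ :=
  (∑ i, (X i ω - ensMean X ω) ^ 2) / ((n : ℝ) - 1)

/-- The Spread-Error statistic `δ_τ = ((n+1)/n) S_e² − (X̄ − Y)²`. -/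
noncomputable def spreadError {Ω : Type*} {n : ℕ} (X : Fin n → Ω → ℝ) (Y : Ω → ℝ) (ω : Ω) : ℝ :=
  (((n : ℝ) + 1) / n) * ensVar X ω - (ensMean X ω - Y ω) ^ 2

lemma int_mul' {Ω : Type*} [MeasurableSpace Ω] {μ : Measure Ω} {f g : Ω → ℝ}
    (hf : MemLp f 2 μ) (hg : MemLp g 2 μ) : Integrable (fun ω => f ω * g ω) μ := by
  have h := L2.integrable_inner (𝕜 := ℝ) (hf.toLp f) (hg.toLp g)
  refine h.congr ?_
  filter_upwards [hf.coeFn_toLp, hg.coeFn_toLp] with ω h1 h2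
  simp [h1, h2, RCLike.inner_apply, starRingEnd_apply, mul_comm]

lemma cov_mul' {Ω : Type*} [MeasurableSpace Ω] (μ : Measure Ω) (a b : ℝ) (f g : Ω → ℝ) :
    cov μ (fun ω => a * f ω) (fun ω => b * g ω) = a * b * cov μ f g := by
  unfold cov
  have key : ∀ ω : Ω, (a * f ω - a * (∫ x, f x ∂μ)) * (b * g ω - b * (∫ x, g x ∂μ))
      = a * b * ((f ω - ∫ x, f x ∂μ) * (g ω - ∫ x, g x ∂μ)) := fun ω => by ring
  simp_rw [integral_const_mul, key, integral_const_mul]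

lemma cov_mul_left' {Ω : Type*} [MeasurableSpace Ω] (μ : Measure Ω) (a : ℝ) (f g : Ω → ℝ) :
    cov μ (fun ω => a * f ω) g = a * cov μ f g := by
  have := cov_mul' μ a 1 f g
  simpa using this


/-- Calibration by multiplicative rescaling: if `μ_x = μ_y = 0` and `r = R`, the rescaled
members `X_i* = (σ_y/σ_x) X_i` satisfy the three second-order exchangeability conditions with
the truth, and the expected rescaled ensemble variance equals `(σ_y/σ_x)² σ_e²`. -/
theorem quantile_mapping_calibration
    {Ω : Type*} [MeasurableSpace Ω] (μ : Measure Ω) [IsProbabilityMeasure μ]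
    (n : ℕ) (hn : 2 ≤ n) (X : Fin n → Ω → ℝ) (Y : Ω → ℝ)
    (hL2 : ∀ i, MemLp (X i) 2 μ) (hYL2 : MemLp Y 2 μ)
    (μx σx2 c μy σy2 γ σx σy : ℝ) (hσx2 : 0 < σx2) (hσy2 : 0 < σy2)
    (hmean : ∀ i, ∫ ω, X i ω ∂μ = μx)
    (hvar : ∀ i, cov μ (X i) (X i) = σx2)
    (hcov : ∀ i j, i ≠ j → cov μ (X i) (X j) = c)
    (hmeanY : ∫ ω, Y ω ∂μ = μy)
    (hvarY : cov μ Y Y = σy2)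
    (hcovXY : ∀ i, cov μ (X i) Y = γ)
    (hμx0 : μx = 0) (hμy0 : μy = 0)
    (hσx : σx ^ 2 = σx2) (hσx_pos : 0 < σx)
    (hσy : σy ^ 2 = σy2) (hσy_pos : 0 < σy)
    (hrR : c / σx2 = γ / (σx * σy)) :
    (∀ i, ∫ ω, (σy / σx) * X i ω ∂μ = ∫ ω, Y ω ∂μ) ∧
    (∀ i, cov μ (fun ω => (σy / σx) * X i ω) (fun ω => (σy / σx) * X i ω) = σy2) ∧
    (∀ i j, i ≠ j →
      cov μ (fun ω => (σy / σx) * X i ω) (fun ω => (σy / σx) * X j ω) =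
        cov μ (fun ω => (σy / σx) * X i ω) Y) ∧
    (∫ ω, ensVar (fun i ω => (σy / σx) * X i ω) ω ∂μ) = (σy / σx) ^ 2 * (σx2 - c) := by
  have hσxne : σx ≠ 0 := hσx_pos.ne'
  have hσyne : σy ≠ 0 := hσy_pos.ne'
  have hnn : (n : ℝ) ≠ 0 := by
    have : 0 < n := lt_of_lt_of_le (by norm_num) hn
    exact_mod_cast this.ne'
  have hn1 : (n : ℝ) - 1 ≠ 0 := by
    have h2 : (2 : ℝ) ≤ (n : ℝ) := by exact_mod_cast hn
    linarith
  set a : ℝ := σy / σx with ha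
  -- covariance of a single member with itself after rescaling
  have hc : c * σy = γ * σx := by
    rw [div_eq_div_iff hσx2.ne' (by positivity)] at hrR
    rw [← hσx] at hrR
    apply mul_left_cancel₀ hσxne
    linear_combination hrR
  -- integrability of products
  have Imul : ∀ i j : Fin n, Integrable (fun ω => X i ω * X j ω) μ :=
    fun i j => int_mul' (hL2 i) (hL2 j)
  -- integrals of products
  have hXX : ∀ i j : Fin n, ∫ ω, X i ω * X j ω ∂μ = if i = j then σx2 else c := by
    intro i j
    have hcv : cov μ (X i) (X j) = ∫ ω, X i ω * X j ω ∂μ := by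
      unfold cov
      simp [hmean, hμx0]
    split
    · next h => subst h; rw [← hcv]; exact hvar i
    · next h => rw [← hcv, hcov i j h]
  refine ⟨?_, ?_, ?_, ?_⟩
  · intro i
    rw [integral_const_mul, hmean i, hμx0, hmeanY, hμy0, mul_zero]
  · intro i
    rw [cov_mul', hvar i, ha, ← hσx, ← hσy]
    field_simp
  · intro i j hij
    rw [cov_mul', cov_mul_left', hcov i j hij, hcovXY i, ha]
    field_simp
    linear_combination hc
  · -- ensemble variance scaling pointwise
    have hscale : ∀ ω, ensVar (fun i ω => a * X i ω) ω = a ^ 2 * ensVar X ω := by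
      intro ω
      unfold ensVar ensMean
      rw [← Finset.mul_sum]
      have key : ∀ i : Fin n, (a * X i ω - a * (∑ k, X k ω) / n) ^ 2
          = a ^ 2 * (X i ω - (∑ k, X k ω) / n) ^ 2 := fun i => by ring
      simp_rw [key, ← Finset.mul_sum, mul_div_assoc]
    simp_rw [hscale]
    rw [integral_const_mul]
    congr 1
    -- now compute ∫ ensVar X = σx2 - c
    have hpt : ∀ ω, ensVar X ω
        = ((∑ i, X i ω * X i ω) - (∑ i, ∑ j, X i ω * X j ω) / n) / ((n : ℝ) - 1) := by
      intro ω
      unfold ensVar ensMean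
      congr 1
      have expand : ∀ i : Fin n, (X i ω - (∑ k, X k ω) / n) ^ 2
          = X i ω * X i ω - 2 / n * ((∑ k, X k ω) * X i ω)
            + ((∑ k, X k ω) / n) ^ 2 := fun i => by ring
      simp_rw [expand]
      rw [Finset.sum_add_distrib, Finset.sum_sub_distrib, ← Finset.mul_sum, ← Finset.mul_sum,
        Finset.sum_const, Finset.card_univ, Fintype.card_fin, nsmul_eq_mul,
        ← Finset.sum_mul_sum]
      field_simp
      ring
    simp_rw [hpt]
    have Id : Integrable (fun ω => ∑ i, X i ω * X i ω) μ :=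
      integrable_finset_sum _ fun i _ => Imul i i
    have Iee : Integrable (fun ω => ∑ i, ∑ j, X i ω * X j ω) μ :=
      integrable_finset_sum _ fun i _ => integrable_finset_sum _ fun j _ => Imul i j
    rw [integral_div, integral_sub Id (Iee.div_const _), integral_div,
      integral_finset_sum _ fun i _ => Imul i i,
      integral_finset_sum _ fun i _ => integrable_finset_sum _ fun j _ => Imul i j]
    have h1 : ∑ i : Fin n, ∫ ω, X i ω * X i ω ∂μ = (n : ℝ) * σx2 := by
      rw [Finset.sum_congr rfl fun i _ => by rw [hXX i i, if_pos rfl]]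
      simp [Finset.sum_const, Finset.card_univ, mul_comm]
    have h2 : ∑ i : Fin n, ∫ ω, ∑ j, X i ω * X j ω ∂μ
        = (n : ℝ) * ((n : ℝ) * c + (σx2 - c)) := by
      have inner : ∀ i : Fin n, ∫ ω, ∑ j, X i ω * X j ω ∂μ = (n : ℝ) * c + (σx2 - c) := by
        intro i
        rw [integral_finset_sum _ fun j _ => Imul i j]
        rw [Finset.sum_congr rfl fun j _ => hXX i j]
        have split : ∀ j : Fin n, (if i = j then σx2 else c)
            = c + (if i = j then σx2 - c else 0) := fun j => by split <;> ring
        simp_rw [split]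
        rw [Finset.sum_add_distrib, Finset.sum_const, Finset.card_univ, Fintype.card_fin,
          nsmul_eq_mul, Finset.sum_ite_eq]
        simp
      rw [Finset.sum_congr rfl fun i _ => inner i]
      simp [Finset.sum_const, Finset.card_univ, mul_add]
    rw [h1, h2]
    field_simp
    ring
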